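/- arXiv:1306.1929 — 2 statements merged into one kernel-verified Lean document; each statement's English description precedes it below -/
import Mathlib

section
/- Let d ≥ 1 and let G : S_d → ℝ be monotone and sublinear. Then there exists a nonempty, bounded, closed and convex subset Γ ⊂ S_d⁺ such that G(A) = (1/2) · sup_{γ ∈ Γ} tr(γA) for every A ∈ S_d. -/
/-!
By Hahn–Banach, a sublinear functional is the pointwise maximum of the linear functionals it
dominates. Applied to `X ↦ 2 G ((X + Xᵀ) / 2)` on all matrices, with every linear functional
written as `B ↦ tr (γ B)` for a symmetric `γ`, this makes `2 G` the support function of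
`Γ = {γ symmetric | tr (γ B) ≤ 2 G B for all symmetric B}`. Testing against `E_ij + E_ji` and
`-(E_ij + E_ji)` bounds the entries of every `γ ∈ Γ`, and monotonicity gives
`tr (γ x xᵀ) ≥ -2 G (-x xᵀ) ≥ -2 G 0 = 0`, i.e. `γ ⪰ 0`.
-/

open Matrix
open scoped Matrix.Norms.L2Operator

theorem exists_linearMap_le_sublinear_eq {E : Type*} [AddCommGroup E] [Module ℝ E]
    (N : E → ℝ) (N_hom : ∀ c : ℝ, 0 < c → ∀ x, N (c • x) = c * N x)
    (N_add : ∀ x y, N (x + y) ≤ N x + N y) (x : E) :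
    ∃ g : E →ₗ[ℝ] ℝ, (∀ y, g y ≤ N y) ∧ g x = N x := by
  have N_zero : N 0 = 0 := by
    have := N_hom 2 two_pos 0
    rw [smul_zero] at this
    linarith
  have hx : ∀ c : ℝ, c • x = 0 → c • N x = 0 := by
    intro c hc
    rcases smul_eq_zero.mp hc with rfl | rfl <;> simp [N_zero]
  set f := LinearPMap.mkSpanSingleton' (σ := RingHom.id ℝ) x (N x) hx
  have hf : ∀ y : f.domain, f y ≤ N y := by
    rintro ⟨y, hy⟩
    obtain ⟨c, rfl⟩ := Submodule.mem_span_singleton.mp hy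
    rw [LinearPMap.mkSpanSingleton'_apply, RingHom.id_apply, smul_eq_mul]
    rcases lt_trichotomy c 0 with hc | rfl | hc
    · have := N_add (c • x) ((-c) • x)
      rw [← add_smul, add_neg_cancel, zero_smul, N_zero, N_hom (-c) (neg_pos.2 hc)] at this
      linarith
    · simp [N_zero]
    · rw [N_hom c hc]
  obtain ⟨g, hgf, hgN⟩ := exists_extension_of_le_sublinear f N N_hom N_add hf
  have hmem : x ∈ f.domain := Submodule.mem_span_singleton_self x
  exact ⟨g, hgN, (hgf ⟨x, hmem⟩).trans (LinearPMap.mkSpanSingleton'_apply_self x (N x) hx hmem)⟩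

namespace Matrix

section Trace

variable {m n R : Type*} [Fintype m] [Fintype n] [CommSemiring R]

theorem exists_trace_mul_eq_of_linearMap [DecidableEq m] [DecidableEq n]
    (g : Matrix m n R →ₗ[R] R) : ∃ γ : Matrix n m R, ∀ X, (γ * X).trace = g X := by
  refine ⟨of fun i j => g (single j i 1), fun X =>
    LinearMap.congr_fun (f := traceLinearMap n R R ∘ₗ mulLeftLinearMap n R _) ?_ X⟩
  refine ext_linearMap R fun i j => LinearMap.ext fun a => ?_
  simp only [LinearMap.comp_apply, singleLinearMap_apply, traceLinearMap_apply,
    mulLeftLinearMap_apply, trace_mul_single, of_apply, op_smul_eq_mul]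
  rw [mul_comm, ← smul_eq_mul, ← g.map_smul, smul_single, smul_eq_mul, mul_one]

theorem trace_transpose_mul_of_isSymm (γ : Matrix n n R) {B : Matrix n n R} (hB : B.IsSymm) :
    (γᵀ * B).trace = (γ * B).trace := by
  rw [← trace_transpose_mul, transpose_transpose, hB.eq]

theorem trace_mul_vecMulVec (γ : Matrix m n R) (x : n → R) (y : m → R) :
    (γ * vecMulVec x y).trace = y ⬝ᵥ γ *ᵥ x := by
  rw [mul_vecMulVec, trace_vecMulVec, dotProduct_comm]

theorem trace_mul_single_add_single_of_isSymm [DecidableEq n] {γ : Matrix n n R}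
    (hγ : γ.IsSymm) (i j : n) : (γ * (single i j 1 + single j i 1)).trace = 2 * γ i j := by
  rw [mul_add, trace_add, trace_mul_single, trace_mul_single, hγ.apply i j]
  simp [two_mul]

end Trace

theorem exists_isSymm_trace_mul_eq_of_linearMap {n : Type*} [Fintype n] [DecidableEq n]
    (g : Matrix n n ℝ →ₗ[ℝ] ℝ) :
    ∃ γ : Matrix n n ℝ, γ.IsSymm ∧ ∀ B, B.IsSymm → (γ * B).trace = g B := by
  obtain ⟨γ, hγ⟩ := exists_trace_mul_eq_of_linearMap g
  refine ⟨(1 / 2 : ℝ) • (γ + γᵀ), (isSymm_add_transpose_self γ).smul _, fun B hB => ?_⟩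
  rw [smul_mul, add_mul, trace_smul, trace_add, trace_transpose_mul_of_isSymm γ hB, hγ,
    smul_eq_mul]
  ring

structure IsSublinearOnSymm {n : Type*} (G : Matrix n n ℝ → ℝ) : Prop where
  add_le : ∀ A B : Matrix n n ℝ, A.IsSymm → B.IsSymm → G (A + B) ≤ G A + G B
  smul_eq : ∀ (l : ℝ) (A : Matrix n n ℝ), 0 ≤ l → A.IsSymm → G (l • A) = l * G A

theorem IsSublinearOnSymm.map_zero {n : Type*} {G : Matrix n n ℝ → ℝ}
    (hG : IsSublinearOnSymm G) : G 0 = 0 := by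
  simpa using hG.smul_eq 0 0 le_rfl isSymm_zero

theorem IsSublinearOnSymm.const_mul {n : Type*} {G : Matrix n n ℝ → ℝ}
    (hG : IsSublinearOnSymm G) {a : ℝ} (ha : 0 ≤ a) : IsSublinearOnSymm fun A => a * G A where
  add_le A B hA hB := by nlinarith [hG.add_le A B hA hB]
  smul_eq l A hl hA := by rw [hG.smul_eq l A hl hA]; ring

section TraceDominated

variable {n : Type*} [Fintype n]

def traceDominated (G : Matrix n n ℝ → ℝ) : Set (Matrix n n ℝ) :=
  {γ | γ.IsSymm ∧ ∀ B, B.IsSymm → (γ * B).trace ≤ G B}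

theorem isClosed_traceDominated (G : Matrix n n ℝ → ℝ) : IsClosed (traceDominated G) := by
  have : traceDominated G = {γ | γᵀ = γ} ∩ ⋂ B ∈ {B : Matrix n n ℝ | B.IsSymm},
      {γ | (γ * B).trace ≤ G B} := by
    ext γ
    simp [traceDominated, IsSymm]
  rw [this]
  exact (isClosed_eq continuous_id.matrix_transpose continuous_id).inter
    (isClosed_biInter fun B _ =>
      isClosed_le (continuous_id.matrix_mul continuous_const).matrix_trace continuous_const)

theorem convex_traceDominated (G : Matrix n n ℝ → ℝ) : Convex ℝ (traceDominated G) := by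
  rintro γ ⟨hγ, hγG⟩ δ ⟨hδ, hδG⟩ a b ha hb hab
  refine ⟨(hγ.smul a).add (hδ.smul b), fun B hB => ?_⟩
  rw [add_mul, smul_mul, smul_mul, trace_add, trace_smul, trace_smul, smul_eq_mul, smul_eq_mul]
  calc a * (γ * B).trace + b * (δ * B).trace ≤ a * G B + b * G B := by
        gcongr
        exacts [hγG B hB, hδG B hB]
    _ = G B := by rw [← add_mul, hab, one_mul]

theorem isBounded_traceDominated [DecidableEq n] (G : Matrix n n ℝ → ℝ) :
    Bornology.IsBounded (traceDominated G) := by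
  set P : n → n → Matrix n n ℝ := fun i j => single i j 1 + single j i 1
  have hP : ∀ i j, (P i j).IsSymm := fun i j => by
    simp [P, IsSymm, transpose_single, add_comm]
  have hK : IsCompact (Set.univ.pi fun i => Set.univ.pi fun j =>
      Set.Icc (-G (-P i j) / 2) (G (P i j) / 2) : Set (Matrix n n ℝ)) :=
    isCompact_univ_pi fun i => isCompact_univ_pi fun j => isCompact_Icc
  refine (IsCompact.isBounded (α := Matrix n n ℝ) hK).subset ?_
  rintro γ ⟨hγ, hγG⟩
  refine Set.mem_univ_pi.2 fun i => Set.mem_univ_pi.2 fun j => ?_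
  have hle := hγG (P i j) (hP i j)
  have hge := hγG (-P i j) (hP i j).neg
  rw [trace_mul_single_add_single_of_isSymm hγ] at hle
  rw [mul_neg, trace_neg, trace_mul_single_add_single_of_isSymm hγ] at hge
  constructor <;> linarith

theorem posSemidef_of_mem_traceDominated {G : Matrix n n ℝ → ℝ} (hG : IsSublinearOnSymm G)
    (hmono : ∀ A B : Matrix n n ℝ, A.IsSymm → B.IsSymm → (A - B).PosSemidef → G B ≤ G A)
    {γ : Matrix n n ℝ} (hγ : γ ∈ traceDominated G) : γ.PosSemidef := by
  refine PosSemidef.of_dotProduct_mulVec_nonneg (isHermitian_iff_isSymm.2 hγ.1) fun x => ?_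
  have hx : (vecMulVec x x).PosSemidef := by
    simpa using posSemidef_vecMulVec_self_star x
  have hxs : (vecMulVec x x).IsSymm := isHermitian_iff_isSymm.1 hx.isHermitian
  have hle := hγ.2 _ hxs.neg
  have hneg := hmono 0 _ isSymm_zero hxs.neg (by simpa using hx)
  rw [mul_neg, trace_neg, trace_mul_vecMulVec] at hle
  rw [hG.map_zero] at hneg
  simp only [star_trivial]
  linarith

namespace IsSublinearOnSymm

variable [DecidableEq n] {G : Matrix n n ℝ → ℝ}

theorem exists_mem_traceDominated_trace_mul_eq (hG : IsSublinearOnSymm G)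
    {A : Matrix n n ℝ} (hA : A.IsSymm) : ∃ γ ∈ traceDominated G, (γ * A).trace = G A := by
  set S : Matrix n n ℝ →ₗ[ℝ] Matrix n n ℝ := (1 / 2 : ℝ) •
    (LinearMap.id + (transposeLinearEquiv n n ℝ ℝ : Matrix n n ℝ →ₗ[ℝ] Matrix n n ℝ))
  have hS : ∀ X, (S X).IsSymm := fun X => (isSymm_add_transpose_self X).smul (1 / 2 : ℝ)
  have hSsymm : ∀ B : Matrix n n ℝ, B.IsSymm → S B = B := by
    intro B hB
    change (1 / 2 : ℝ) • (B + Bᵀ) = B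
    rw [hB.eq]
    module
  obtain ⟨g, hgN, hgA⟩ := exists_linearMap_le_sublinear_eq (G ∘ S)
    (fun c hc X => by simp only [Function.comp_apply, map_smul, hG.smul_eq c _ hc.le (hS X)])
    (fun X Y => by simp only [Function.comp_apply, map_add, hG.add_le _ _ (hS X) (hS Y)]) A
  obtain ⟨γ, hγ, hγg⟩ := exists_isSymm_trace_mul_eq_of_linearMap g
  refine ⟨γ, ⟨hγ, fun B hB => ?_⟩, ?_⟩
  · simpa [hγg B hB, hSsymm B hB] using hgN B
  · simpa [hγg A hA, hSsymm A hA] using hgA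

theorem traceDominated_nonempty (hG : IsSublinearOnSymm G) : (traceDominated G).Nonempty :=
  let ⟨γ, hγ, _⟩ := hG.exists_mem_traceDominated_trace_mul_eq isSymm_zero
  ⟨γ, hγ⟩

theorem sSup_trace_mul_traceDominated (hG : IsSublinearOnSymm G)
    {A : Matrix n n ℝ} (hA : A.IsSymm) :
    sSup ((fun γ => (γ * A).trace) '' traceDominated G) = G A := by
  obtain ⟨γ, hγ, hγA⟩ := hG.exists_mem_traceDominated_trace_mul_eq hA
  refine IsGreatest.csSup_eq ⟨⟨γ, hγ, hγA⟩, ?_⟩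
  rintro _ ⟨δ, hδ, rfl⟩
  exact hδ.2 A hA

end IsSublinearOnSymm

end TraceDominated

end Matrix

theorem representation_of_monotone_sublinear_general
    (d : ℕ) (G : Matrix (Fin d) (Fin d) ℝ → ℝ)
    (hmono : ∀ A B : Matrix (Fin d) (Fin d) ℝ,
      A.IsSymm → B.IsSymm → (A - B).PosSemidef → G B ≤ G A)
    (hsub : ∀ A B : Matrix (Fin d) (Fin d) ℝ,
      A.IsSymm → B.IsSymm → G (A + B) ≤ G A + G B)
    (hpos : ∀ (l : ℝ) (A : Matrix (Fin d) (Fin d) ℝ),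
      0 ≤ l → A.IsSymm → G (l • A) = l * G A) :
    ∃ Γ : Set (Matrix (Fin d) (Fin d) ℝ),
      Γ.Nonempty ∧ Bornology.IsBounded Γ ∧ IsClosed Γ ∧ Convex ℝ Γ ∧
      (∀ γ ∈ Γ, γ.IsSymm ∧ γ.PosSemidef) ∧
      (∀ A : Matrix (Fin d) (Fin d) ℝ, A.IsSymm →
        G A = (1 / 2) * sSup ((fun γ => (γ * A).trace) '' Γ)) := by
  have hG : IsSublinearOnSymm fun A => 2 * G A :=
    IsSublinearOnSymm.const_mul ⟨hsub, hpos⟩ zero_le_two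
  have hmono₂ : ∀ A B : Matrix (Fin d) (Fin d) ℝ,
      A.IsSymm → B.IsSymm → (A - B).PosSemidef → 2 * G B ≤ 2 * G A :=
    fun A B hA hB hAB => by linarith [hmono A B hA hB hAB]
  refine ⟨traceDominated fun A => 2 * G A, hG.traceDominated_nonempty,
    isBounded_traceDominated _, isClosed_traceDominated _, convex_traceDominated _,
    fun γ hγ => ⟨hγ.1, posSemidef_of_mem_traceDominated hG hmono₂ hγ⟩, fun A hA => ?_⟩
  rw [hG.sSup_trace_mul_traceDominated hA]
  ring

/-- Representation of a monotone sublinear function `G` on the space of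
`d × d` real symmetric matrices: there is a nonempty, bounded, closed, convex set
`Γ` of positive semidefinite symmetric matrices with
`G A = (1/2) * sup_{γ ∈ Γ} tr (γ * A)` for all symmetric `A`. -/
theorem representation_of_monotone_sublinear
    (d : ℕ) (hd : 1 ≤ d) (G : Matrix (Fin d) (Fin d) ℝ → ℝ)
    (hmono : ∀ A B : Matrix (Fin d) (Fin d) ℝ,
      A.IsSymm → B.IsSymm → (A - B).PosSemidef → G B ≤ G A)
    (hsub : ∀ A B : Matrix (Fin d) (Fin d) ℝ,
      A.IsSymm → B.IsSymm → G (A + B) ≤ G A + G B)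
    (hpos : ∀ (l : ℝ) (A : Matrix (Fin d) (Fin d) ℝ),
      0 ≤ l → A.IsSymm → G (l • A) = l * G A) :
    ∃ Γ : Set (Matrix (Fin d) (Fin d) ℝ),
      Γ.Nonempty ∧ Bornology.IsBounded Γ ∧ IsClosed Γ ∧ Convex ℝ Γ ∧
      (∀ γ ∈ Γ, γ.IsSymm ∧ γ.PosSemidef) ∧
      (∀ A : Matrix (Fin d) (Fin d) ℝ, A.IsSymm →
        G A = (1 / 2) * sSup ((fun γ => (γ * A).trace) '' Γ)) :=
  representation_of_monotone_sublinear_general d G hmono hsub hpos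
end

section
/- Let d ≥ 1, T > 0, and let G : S_d → ℝ be monotone and sublinear, and suppose moreover that G(A) + G(−A) > 0 for every A ∈ S_d with A ≠ 0. Let f : [0,T]×ℝ×ℝ^d → ℝ and g_ij : [0,T]×ℝ×ℝ^d → ℝ (1 ≤ i, j ≤ d) with g_ij = g_ji. Then condition (som-eq2) holds if and only if f and all the g_ij are independent of y, i.e., f(t,y,z) = f(t,y′,z) and g_ij(t,y,z) = g_ij(t,y′,z) for all t ∈ [0,T], y, y′ ∈ ℝ, z ∈ ℝ^d and all i, j. -/
open Matrix

section SublinearNondegenerate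

variable {n : Type*} {G : Matrix n n ℝ → ℝ}

theorem map_zero_of_map_smul
    (hpos : ∀ (l : ℝ) (A : Matrix n n ℝ), 0 ≤ l → A.IsSymm → G (l • A) = l * G A) :
    G 0 = 0 := by
  simpa using hpos 0 0 le_rfl isSymm_zero

theorem eq_zero_of_map_add_map_neg_eq_zero
    (hnondeg : ∀ A : Matrix n n ℝ, A.IsSymm → A ≠ 0 → 0 < G A + G (-A))
    {A : Matrix n n ℝ} (hA : A.IsSymm) (h : G A + G (-A) = 0) : A = 0 := by
  by_contra hne
  exact (hnondeg A hA hne).ne' h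

/-- Condition (som-eq2) at `(y, y')` and at `(y', y)`: adding the two equations cancels `a - b`
and leaves `G (M - N) + G (-(M - N)) = 0`. -/
theorem eq_and_eq_of_sub_add_two_mul_map_sub_eq_zero (hG0 : G 0 = 0)
    (hnondeg : ∀ A : Matrix n n ℝ, A.IsSymm → A ≠ 0 → 0 < G A + G (-A))
    {a b : ℝ} {M N : Matrix n n ℝ} (hM : M.IsSymm) (hN : N.IsSymm)
    (h : a - b + 2 * G (M - N) = 0) (h' : b - a + 2 * G (N - M) = 0) :
    a = b ∧ M = N := by
  rw [← neg_sub M N] at h'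
  have hMN : M - N = 0 := eq_zero_of_map_add_map_neg_eq_zero hnondeg (hM.sub hN) (by linarith)
  rw [hMN, hG0] at h
  exact ⟨by linarith, sub_eq_zero.mp hMN⟩

end SublinearNondegenerate

theorem someq2_iff_independent_of_y_general
    (d : ℕ) (T : ℝ)
    (G : Matrix (Fin d) (Fin d) ℝ → ℝ)
    (hpos : ∀ (l : ℝ) (A : Matrix (Fin d) (Fin d) ℝ),
      0 ≤ l → A.IsSymm → G (l • A) = l * G A)
    (hnondeg : ∀ A : Matrix (Fin d) (Fin d) ℝ, A.IsSymm → A ≠ 0 →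
      0 < G A + G (-A))
    (f : ℝ → ℝ → (Fin d → ℝ) → ℝ)
    (g : Fin d → Fin d → ℝ → ℝ → (Fin d → ℝ) → ℝ)
    (hgsymm : ∀ i j, g i j = g j i) :
    (∀ t ∈ Set.Icc (0 : ℝ) T, ∀ (y y' : ℝ) (z : Fin d → ℝ),
        f t y z - f t y' z +
          2 * G (Matrix.of fun i j => g i j t y z - g i j t y' z) = 0) ↔
    (∀ t ∈ Set.Icc (0 : ℝ) T, ∀ (y y' : ℝ) (z : Fin d → ℝ),
        f t y z = f t y' z ∧ ∀ i j, g i j t y z = g i j t y' z) := by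
  have hG0 := map_zero_of_map_smul hpos
  have hsymm : ∀ t y z, (Matrix.of fun i j => g i j t y z).IsSymm := fun t y z =>
    IsSymm.ext fun i j => by rw [of_apply, of_apply, hgsymm]
  constructor
  · intro h t ht y y' z
    -- `of fun i j => u i j - v i j` is definitionally `of u - of v`
    obtain ⟨hf, hg⟩ := eq_and_eq_of_sub_add_two_mul_map_sub_eq_zero hG0 hnondeg
      (hsymm t y z) (hsymm t y' z) (h t ht y y' z) (h t ht y' y z)
    exact ⟨hf, fun i j => congrFun (congrFun hg i) j⟩
  · intro h t ht y y' z
    obtain ⟨hf, hg⟩ := h t ht y y' z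
    have hzero : (Matrix.of fun i j => g i j t y z - g i j t y' z) = 0 := by
      ext i j
      simp [hg]
    rw [hzero, hG0, hf]
    ring

/-- If `G` is monotone, sublinear and strictly nondegenerate
(`G A + G (-A) > 0` for all symmetric `A ≠ 0`), then condition (som-eq2) holds
if and only if `f` and all the `g i j` are independent of `y`. -/
theorem someq2_iff_independent_of_y
    (d : ℕ) (hd : 1 ≤ d) (T : ℝ) (hT : 0 < T)
    (G : Matrix (Fin d) (Fin d) ℝ → ℝ)
    (hmono : ∀ A B : Matrix (Fin d) (Fin d) ℝ,
      A.IsSymm → B.IsSymm → (A - B).PosSemidef → G B ≤ G A)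
    (hsub : ∀ A B : Matrix (Fin d) (Fin d) ℝ,
      A.IsSymm → B.IsSymm → G (A + B) ≤ G A + G B)
    (hpos : ∀ (l : ℝ) (A : Matrix (Fin d) (Fin d) ℝ),
      0 ≤ l → A.IsSymm → G (l • A) = l * G A)
    (hnondeg : ∀ A : Matrix (Fin d) (Fin d) ℝ, A.IsSymm → A ≠ 0 →
      0 < G A + G (-A))
    (f : ℝ → ℝ → (Fin d → ℝ) → ℝ)
    (g : Fin d → Fin d → ℝ → ℝ → (Fin d → ℝ) → ℝ)
    (hgsymm : ∀ i j, g i j = g j i) :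
    (∀ t ∈ Set.Icc (0 : ℝ) T, ∀ (y y' : ℝ) (z : Fin d → ℝ),
        f t y z - f t y' z +
          2 * G (Matrix.of fun i j => g i j t y z - g i j t y' z) = 0) ↔
    (∀ t ∈ Set.Icc (0 : ℝ) T, ∀ (y y' : ℝ) (z : Fin d → ℝ),
        f t y z = f t y' z ∧ ∀ i j, g i j t y z = g i j t y' z) :=
  someq2_iff_independent_of_y_general d T G hpos hnondeg f g hgsymm
end
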